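/- For any μ ∈ cabv(X,0) (vector measures of bounded variation with μ(T)=0 on a compact metric space T with values in a Hilbert space X), the Monge–Kantorovich norms satisfy ‖μ‖_MK ≤ ‖μ‖*_MK ≤ ‖μ‖_MK · (diam(T) + 1), and also ‖μ‖*_MK ≤ ‖μ‖ · diam(T). -/

import Mathlib

open MeasureTheory Filter Topology Set

noncomputable section

/-- A finite Borel partition of the whole space. -/
def IsBorelPartition {T : Type*} [MeasurableSpace T] (P : Finset (Set T)) : Prop :=
  (∀ A ∈ P, MeasurableSet A) ∧ ((P : Set (Set T)).PairwiseDisjoint id) ∧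
    ⋃₀ (P : Set (Set T)) = Set.univ

/-- Total variation of a vector measure, as an extended real. -/
def evar {T X : Type*} [MeasurableSpace T] [NormedAddCommGroup X]
    (μ : VectorMeasure T X) : ENNReal :=
  ⨆ (P : Finset (Set T)) (_ : IsBorelPartition P), ∑ A ∈ P, (‖μ A‖₊ : ENNReal)

/-- Bounded variation. -/
def BddVar {T X : Type*} [MeasurableSpace T] [NormedAddCommGroup X]
    (μ : VectorMeasure T X) : Prop := evar μ ≠ ⊤

/-- The variational norm. -/
def varNorm {T X : Type*} [MeasurableSpace T] [NormedAddCommGroup X]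
    (μ : VectorMeasure T X) : ℝ := (evar μ).toReal

/-- Composition of a bounded operator with a vector measure. -/
def opComp {T X Y 𝕜 : Type*} [MeasurableSpace T] [NontriviallyNormedField 𝕜]
    [NormedAddCommGroup X] [NormedSpace 𝕜 X] [NormedAddCommGroup Y] [NormedSpace 𝕜 Y]
    (R : X →L[𝕜] Y) (μ : VectorMeasure T X) : VectorMeasure T Y :=
  μ.mapRange R.toLinearMap.toAddMonoidHom R.continuous

/-- The Markov-type operator generated by operators `R i` and maps `ω i`. -/
def markovH {T X 𝕜 : Type*} [MeasurableSpace T] [NontriviallyNormedField 𝕜]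
    [NormedAddCommGroup X] [NormedSpace 𝕜 X] {M : ℕ}
    (R : Fin M → X →L[𝕜] X) (ω : Fin M → T → T) (μ : VectorMeasure T X) :
    VectorMeasure T X :=
  ∑ i, opComp (R i) (μ.map (ω i))

/-- Simple (finitely-valued, measurable) function. -/
def IsSimpleFn {T X : Type*} [MeasurableSpace T] (g : T → X) : Prop :=
  (Set.range g).Finite ∧ ∀ x : X, MeasurableSet (g ⁻¹' {x})

/-- Integral of a simple function against a vector measure. -/
def simpleIntegral (𝕜 : Type*) {T X : Type*} [RCLike 𝕜] [MeasurableSpace T]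
    [NormedAddCommGroup X] [InnerProductSpace 𝕜 X] (μ : VectorMeasure T X) (g : T → X) : 𝕜 :=
  ∑ᶠ x : X, (inner 𝕜 x (μ (g ⁻¹' {x})) : 𝕜)

/-- `I` is the (uniform, sesquilinear) integral of `f` with respect to `μ`. -/
def HasUIntegral (𝕜 : Type*) {T X : Type*} [RCLike 𝕜] [MeasurableSpace T]
    [NormedAddCommGroup X] [InnerProductSpace 𝕜 X] (μ : VectorMeasure T X)
    (f : T → X) (I : 𝕜) : Prop :=
  ∀ g : ℕ → T → X, (∀ n, IsSimpleFn (g n)) → TendstoUniformly g f atTop →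
    Tendsto (fun n => simpleIntegral 𝕜 μ (g n)) atTop (nhds I)

/-- The uniform integral (defaulting to `0` when it does not exist). -/
def uIntegral (𝕜 : Type*) {T X : Type*} [RCLike 𝕜] [MeasurableSpace T]
    [NormedAddCommGroup X] [InnerProductSpace 𝕜 X] (μ : VectorMeasure T X) (f : T → X) : 𝕜 :=
  letI := Classical.propDecidable
  if h : ∃ I, HasUIntegral 𝕜 μ f I then h.choose else 0

/-- The Monge–Kantorovich norm. -/
def mkNorm (𝕜 : Type*) {T X : Type*} [RCLike 𝕜] [PseudoMetricSpace T] [MeasurableSpace T]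
    [NormedAddCommGroup X] [InnerProductSpace 𝕜 X] (μ : VectorMeasure T X) : ℝ :=
  sSup {s | ∃ (f : T → X) (L : NNReal), LipschitzWith L f ∧ (∀ t, ‖f t‖ + (L : ℝ) ≤ 1) ∧
    s = ‖uIntegral 𝕜 μ f‖}

/-- The modified Monge–Kantorovich norm. -/
def mkNormStar (𝕜 : Type*) {T X : Type*} [RCLike 𝕜] [PseudoMetricSpace T] [MeasurableSpace T]
    [NormedAddCommGroup X] [InnerProductSpace 𝕜 X] (μ : VectorMeasure T X) : ℝ :=
  sSup {s | ∃ f : T → X, LipschitzWith 1 f ∧ s = ‖uIntegral 𝕜 μ f‖}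

/-- The `X`-valued Dirac measure `B ↦ δ_t(B) • x`. -/
def diracVM {T : Type*} [MeasurableSpace T] {𝕜 X : Type*} [RCLike 𝕜]
    [NormedAddCommGroup X] [NormedSpace 𝕜 X] (t : T) (x : X) : VectorMeasure T X :=
  ((Measure.dirac t).toSignedMeasure).mapRange
    { toFun := fun c : ℝ => (c : 𝕜) • x
      map_zero' := by simp
      map_add' := fun a b => by push_cast; rw [add_smul] }
    (RCLike.continuous_ofReal.smul continuous_const)

end

/-!
Since `μ T = 0`, recentring a function at a point, `f ↦ f - f t₀`, does not change its
integral. A recentred `1`-Lipschitz function is bounded by `diam T`, which bounds its integral by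
`‖μ‖ · diam T`; scaled by `(diam T + 1)⁻¹` it becomes admissible for `‖·‖_MK`, which gives the
middle inequality. The first one holds because `‖f‖_∞ + Lip f ≤ 1` forces `Lip f ≤ 1`.
Integrals of continuous functions are controlled through uniform approximation by simple
functions, available since `T` is compact.
-/

open scoped ComplexConjugate

theorem LipschitzWith.dist_le_diam_univ {T Y : Type*} [PseudoMetricSpace T] [BoundedSpace T]
    [PseudoMetricSpace Y] {g : T → Y} (hg : LipschitzWith 1 g) (s t : T) :
    dist (g s) (g t) ≤ Metric.diam (univ : Set T) :=
  (hg.dist_le_mul s t).trans <| by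
    simpa using Metric.dist_le_diam_of_mem (Bornology.isBounded_univ.2 ‹_›) (mem_univ s)
      (mem_univ t)

theorem LipschitzWith.lipschitzWith_one_of_norm_add_le_one {T X : Type*} [PseudoEMetricSpace T]
    [SeminormedAddGroup X] {L : NNReal} {f : T → X} (hf : LipschitzWith L f)
    (hfL : ∀ t, ‖f t‖ + L ≤ 1) : LipschitzWith 1 f := fun s t =>
  (hf s t).trans <| by
    have : (L : ℝ) ≤ 1 := by linarith [hfL s, norm_nonneg (f s)]
    gcongr
    exact_mod_cast this

namespace MeasureTheory

variable {T X : Type*} [MeasurableSpace T]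

theorem SimpleFunc.isSimpleFn (g : SimpleFunc T X) : IsSimpleFn g :=
  ⟨g.finite_range, g.measurableSet_fiber⟩

def IsSimpleFn.toSimpleFunc {g : T → X} (hg : IsSimpleFn g) : SimpleFunc T X :=
  ⟨g, hg.2, hg.1⟩

@[simp]
theorem IsSimpleFn.coe_toSimpleFunc {g : T → X} (hg : IsSimpleFn g) : ⇑hg.toSimpleFunc = g :=
  rfl

theorem IsSimpleFn.comp {Y : Type*} {g : T → X} (hg : IsSimpleFn g) (φ : X → Y) :
    IsSimpleFn (φ ∘ g) :=
  (hg.toSimpleFunc.map φ).isSimpleFn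

theorem SimpleFunc.isBorelPartition_image_preimage_singleton [DecidableEq (Set T)]
    (g : SimpleFunc T X) : IsBorelPartition (g.range.image fun x => g ⁻¹' {x}) := by
  refine ⟨?_, ?_, ?_⟩
  · simp only [Finset.mem_image]
    rintro _ ⟨x, -, rfl⟩
    exact g.measurableSet_fiber x
  · simp only [Finset.coe_image]
    rintro _ ⟨x, -, rfl⟩ _ ⟨y, -, rfl⟩ hxy
    exact (Set.disjoint_singleton.2 fun h => hxy (by rw [h])).preimage g
  · ext t
    simp

section Variation

variable [NormedAddCommGroup X]

theorem sum_norm_le_varNorm {μ : VectorMeasure T X} (hμ : BddVar μ) {P : Finset (Set T)}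
    (hP : IsBorelPartition P) : ∑ A ∈ P, ‖μ A‖ ≤ varNorm μ := by
  have hle : ∑ A ∈ P, (‖μ A‖₊ : ENNReal) ≤ evar μ :=
    le_iSup₂ (f := fun P (_ : IsBorelPartition P) => ∑ A ∈ P, (‖μ A‖₊ : ENNReal)) P hP
  simpa [varNorm, ENNReal.toReal_sum] using ENNReal.toReal_mono hμ hle

theorem SimpleFunc.sum_range_norm_le_varNorm {μ : VectorMeasure T X} (hμ : BddVar μ)
    (g : SimpleFunc T X) : ∑ x ∈ g.range, ‖μ (g ⁻¹' {x})‖ ≤ varNorm μ := by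
  classical
  have hinj : Set.InjOn (fun x => g ⁻¹' {x}) g.range := by
    intro x hx y _ hxy
    obtain ⟨t, rfl⟩ := g.mem_range.1 hx
    simpa using (Set.ext_iff.1 hxy t).1 rfl
  rw [← Finset.sum_image (f := fun A => ‖μ A‖) hinj]
  exact sum_norm_le_varNorm hμ g.isBorelPartition_image_preimage_singleton

theorem SimpleFunc.sum_range_vectorMeasure_preimage_singleton (μ : VectorMeasure T X)
    (g : SimpleFunc T X) : ∑ x ∈ g.range, μ (g ⁻¹' {x}) = μ Set.univ := by
  rw [← VectorMeasure.of_biUnion_finset _ fun x _ => g.measurableSet_fiber x]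
  · congr 1
    ext t
    simp
  · exact fun x _ y _ hxy => Set.disjoint_singleton.2 hxy |>.preimage g

end Variation

section SimpleIntegral

variable {𝕜 : Type*} [RCLike 𝕜] [NormedAddCommGroup X] [InnerProductSpace 𝕜 X]
  (μ : VectorMeasure T X)

theorem SimpleFunc.simpleIntegral_eq_sum_range (g : SimpleFunc T X) :
    simpleIntegral 𝕜 μ g = ∑ x ∈ g.range, inner 𝕜 x (μ (g ⁻¹' {x})) := by
  refine finsum_eq_finsetSum_of_support_subset _ fun x hx => ?_
  by_contra hx'
  rw [Finset.mem_coe, ← g.preimage_eq_empty_iff] at hx'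
  simp [hx'] at hx

theorem SimpleFunc.simpleIntegral_map (g : SimpleFunc T X) {φ : X → X}
    (hφ : Function.Injective φ) :
    simpleIntegral 𝕜 μ (g.map φ) = ∑ x ∈ g.range, inner 𝕜 (φ x) (μ (g ⁻¹' {x})) := by
  classical
  rw [simpleIntegral_eq_sum_range, SimpleFunc.range_map, Finset.sum_image hφ.injOn]
  simp only [SimpleFunc.coe_map, Set.preimage_comp, ← Set.image_singleton, hφ.preimage_image]

theorem SimpleFunc.simpleIntegral_add_const (g : SimpleFunc T X) (c : X) :
    simpleIntegral 𝕜 μ (fun t => g t + c) = simpleIntegral 𝕜 μ g + inner 𝕜 c (μ Set.univ) := by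
  rw [show (fun t => g t + c) = ⇑(g.map (· + c)) from rfl,
    simpleIntegral_map _ _ (add_left_injective c)]
  simp only [inner_add_left]
  rw [Finset.sum_add_distrib, ← inner_sum, sum_range_vectorMeasure_preimage_singleton,
    simpleIntegral_eq_sum_range]

theorem SimpleFunc.simpleIntegral_const_smul (g : SimpleFunc T X) {a : 𝕜} (ha : a ≠ 0) :
    simpleIntegral 𝕜 μ (fun t => a • g t) = conj a * simpleIntegral 𝕜 μ g := by
  rw [show (fun t => a • g t) = ⇑(g.map (a • ·)) from rfl,
    simpleIntegral_map _ _ (smul_right_injective X ha)]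
  simp only [inner_smul_left]
  rw [← Finset.mul_sum, simpleIntegral_eq_sum_range]

theorem SimpleFunc.norm_simpleIntegral_le {μ : VectorMeasure T X} (hμ : BddVar μ)
    (g : SimpleFunc T X) {M : ℝ} (hM0 : 0 ≤ M) (hM : ∀ t, ‖g t‖ ≤ M) :
    ‖simpleIntegral 𝕜 μ g‖ ≤ M * varNorm μ := by
  rw [simpleIntegral_eq_sum_range]
  calc ‖∑ x ∈ g.range, inner 𝕜 x (μ (g ⁻¹' {x}))‖
      ≤ ∑ x ∈ g.range, M * ‖μ (g ⁻¹' {x})‖ := by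
        refine norm_sum_le_of_le _ fun x hx => ?_
        obtain ⟨t, rfl⟩ := g.mem_range.1 hx
        exact (norm_inner_le_norm _ _).trans (by gcongr; exact hM t)
    _ ≤ M * varNorm μ := by
        rw [← Finset.mul_sum]
        exact mul_le_mul_of_nonneg_left (g.sum_range_norm_le_varNorm hμ) hM0

variable {μ} {f : T → X} {I : 𝕜}

theorem HasUIntegral.add_const (h : HasUIntegral 𝕜 μ f I) (c : X) :
    HasUIntegral 𝕜 μ (fun t => f t + c) (I + inner 𝕜 c (μ Set.univ)) := by
  intro g hg hgf
  have hsub : TendstoUniformly (fun n t => g n t - c) f atTop := by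
    simpa [Function.comp_def] using
      (uniformContinuous_id.sub uniformContinuous_const).comp_tendstoUniformly
        (g := fun x : X => x - c) hgf
  have hsimple n : IsSimpleFn (fun t => g n t - c) := (hg n).comp (· - c)
  convert (h _ hsimple hsub).add_const (inner 𝕜 c (μ Set.univ)) using 2 with n
  simpa using (hsimple n).toSimpleFunc.simpleIntegral_add_const μ c

theorem HasUIntegral.const_smul (h : HasUIntegral 𝕜 μ f I) {a : 𝕜} (ha : a ≠ 0) :
    HasUIntegral 𝕜 μ (fun t => a • f t) (conj a * I) := by
  intro g hg hgf
  have hinv : TendstoUniformly (fun n t => a⁻¹ • g n t) f atTop := by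
    simpa [Function.comp_def, smul_smul, ha] using
      (uniformContinuous_const_smul a⁻¹).comp_tendstoUniformly hgf
  have hsimple n : IsSimpleFn (fun t => a⁻¹ • g n t) := (hg n).comp (a⁻¹ • ·)
  convert (h _ hsimple hinv).const_mul (conj a) using 2 with n
  simpa [smul_smul, ha] using (hsimple n).toSimpleFunc.simpleIntegral_const_smul μ ha

theorem norm_uIntegral_le_of_forall {B : ℝ} (hB : 0 ≤ B)
    (h : ∀ I, HasUIntegral 𝕜 μ f I → ‖I‖ ≤ B) : ‖uIntegral 𝕜 μ f‖ ≤ B := by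
  rw [uIntegral]
  split_ifs with hex
  exacts [h _ hex.choose_spec, by simpa using hB]

end SimpleIntegral

section Compact

variable [PseudoMetricSpace T] [CompactSpace T] [OpensMeasurableSpace T]

theorem exists_simpleFunc_dist_lt {Y : Type*} [PseudoMetricSpace Y] [Zero Y] {f : T → Y}
    (hf : Continuous f) {ε : ℝ} (hε : 0 < ε) : ∃ g : SimpleFunc T Y, ∀ t, dist (g t) (f t) < ε := by
  -- Mathlib states uniform approximation by simple functions on products; use `T × Unit`.
  have hsupp := HasCompactSupport.of_compactSpace (f ∘ Prod.fst : T × Unit → Y)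
  obtain ⟨g, hg⟩ := hsupp.exists_simpleFunc_approx_of_prod (hf.comp continuous_fst) hε
  exact ⟨g.comp (fun t => (t, ())) measurable_prodMk_right, fun t => by
    simpa [dist_comm] using hg (t, ())⟩

theorem exists_seq_simpleFunc_tendstoUniformly {Y : Type*} [PseudoMetricSpace Y] [Zero Y]
    {f : T → Y} (hf : Continuous f) :
    ∃ g : ℕ → SimpleFunc T Y, (∀ n t, dist (g n t) (f t) < 1 / (n + 1)) ∧
      TendstoUniformly (fun n => ⇑(g n)) f atTop := by
  choose g hg using fun n : ℕ => exists_simpleFunc_dist_lt hf (Nat.one_div_pos_of_nat (n := n))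
  refine ⟨g, hg, Metric.tendstoUniformly_iff.2 fun ε hε => ?_⟩
  obtain ⟨N, hN⟩ := exists_nat_one_div_lt hε
  filter_upwards [eventually_ge_atTop N] with n hn t
  rw [dist_comm]
  exact (hg n t).trans_le ((Nat.one_div_le_one_div hn).trans hN.le)

variable {𝕜 : Type*} [RCLike 𝕜] [NormedAddCommGroup X] [InnerProductSpace 𝕜 X]
  {μ : VectorMeasure T X} {f : T → X} {I : 𝕜}

theorem HasUIntegral.unique (hf : Continuous f) (h : HasUIntegral 𝕜 μ f I) {J : 𝕜}
    (h' : HasUIntegral 𝕜 μ f J) : I = J := by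
  obtain ⟨g, -, hg⟩ := exists_seq_simpleFunc_tendstoUniformly hf
  have hsimple n := (g n).isSimpleFn
  exact tendsto_nhds_unique (h _ hsimple hg) (h' _ hsimple hg)

theorem HasUIntegral.uIntegral_eq (hf : Continuous f) (h : HasUIntegral 𝕜 μ f I) :
    uIntegral 𝕜 μ f = I := by
  have hex : ∃ I, HasUIntegral 𝕜 μ f I := ⟨I, h⟩
  rw [uIntegral, dif_pos hex]
  exact hex.choose_spec.unique hf h

theorem HasUIntegral.norm_le (h : HasUIntegral 𝕜 μ f I) (hf : Continuous f) (hμ : BddVar μ)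
    {M : ℝ} (hM0 : 0 ≤ M) (hM : ∀ t, ‖f t‖ ≤ M) : ‖I‖ ≤ M * varNorm μ := by
  obtain ⟨g, hgf, hg⟩ := exists_seq_simpleFunc_tendstoUniformly hf
  have hbound (n : ℕ) : ‖simpleIntegral 𝕜 μ (g n)‖ ≤ (M + 1 / (n + 1)) * varNorm μ := by
    refine (g n).norm_simpleIntegral_le hμ (by positivity) fun t => ?_
    have := norm_le_norm_add_norm_sub' (g n t) (f t)
    rw [← dist_eq_norm] at this
    linarith [hM t, hgf n t]
  have hlim : Tendsto (fun n : ℕ => (M + 1 / (n + 1 : ℝ)) * varNorm μ) atTop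
      (𝓝 (M * varNorm μ)) := by
    simpa using (tendsto_const_nhds.add tendsto_one_div_add_atTop_nhds_zero_nat).mul_const
      (varNorm μ)
  exact le_of_tendsto_of_tendsto' (h _ (fun n => (g n).isSimpleFn) hg).norm hlim hbound

theorem norm_uIntegral_le_varNorm_mul_diam (hμ : BddVar μ) (h0 : μ univ = 0)
    (hf : LipschitzWith 1 f) : ‖uIntegral 𝕜 μ f‖ ≤ varNorm μ * Metric.diam (univ : Set T) := by
  have hD : 0 ≤ Metric.diam (univ : Set T) := Metric.diam_nonneg
  refine norm_uIntegral_le_of_forall (mul_nonneg ENNReal.toReal_nonneg hD) fun I hI => ?_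
  rw [mul_comm]
  rcases isEmpty_or_nonempty T with hT | ⟨⟨t₀⟩⟩
  · exact hI.norm_le hf.continuous hμ hD isEmptyElim
  · have hI₀ := hI.add_const (-f t₀)
    rw [h0, inner_zero_right, add_zero] at hI₀
    refine hI₀.norm_le (hf.continuous.add continuous_const) hμ hD fun t => ?_
    simpa [← sub_eq_add_neg, ← dist_eq_norm] using hf.dist_le_diam_univ t t₀

end Compact

section MongeKantorovich

variable [PseudoMetricSpace T] {𝕜 : Type*} [RCLike 𝕜] [NormedAddCommGroup X]
  [InnerProductSpace 𝕜 X] {μ : VectorMeasure T X}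

theorem mkNormStar_le {B : ℝ} (h : ∀ f : T → X, LipschitzWith 1 f → ‖uIntegral 𝕜 μ f‖ ≤ B) :
    mkNormStar 𝕜 μ ≤ B :=
  csSup_le ⟨_, 0, LipschitzWith.const' 0, rfl⟩ <| by
    rintro _ ⟨f, hf, rfl⟩
    exact h f hf

theorem mkNorm_le {B : ℝ}
    (h : ∀ (f : T → X) (L : NNReal), LipschitzWith L f → (∀ t, ‖f t‖ + L ≤ 1) →
      ‖uIntegral 𝕜 μ f‖ ≤ B) :
    mkNorm 𝕜 μ ≤ B :=
  csSup_le ⟨_, 0, 0, LipschitzWith.const' 0, by simp, rfl⟩ <| by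
    rintro _ ⟨f, L, hf, hfL, rfl⟩
    exact h f L hf hfL

variable [CompactSpace T] [OpensMeasurableSpace T]

theorem norm_uIntegral_le_mkNormStar (hμ : BddVar μ) (h0 : μ univ = 0)
    {f : T → X} (hf : LipschitzWith 1 f) :
    ‖uIntegral 𝕜 μ f‖ ≤ mkNormStar 𝕜 μ := by
  refine le_csSup ⟨varNorm μ * Metric.diam (univ : Set T), ?_⟩ ⟨f, hf, rfl⟩
  rintro _ ⟨g, hg, rfl⟩
  exact norm_uIntegral_le_varNorm_mul_diam hμ h0 hg

theorem norm_uIntegral_le_mkNorm (hμ : BddVar μ) (h0 : μ univ = 0)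
    {f : T → X} {L : NNReal} (hf : LipschitzWith L f)
    (hfL : ∀ t, ‖f t‖ + L ≤ 1) : ‖uIntegral 𝕜 μ f‖ ≤ mkNorm 𝕜 μ := by
  refine le_csSup ⟨varNorm μ * Metric.diam (univ : Set T), ?_⟩ ⟨f, L, hf, hfL, rfl⟩
  rintro _ ⟨g, K, hg, hgK, rfl⟩
  exact norm_uIntegral_le_varNorm_mul_diam hμ h0 (hg.lipschitzWith_one_of_norm_add_le_one hgK)

theorem mkNorm_nonneg (hμ : BddVar μ) (h0 : μ univ = 0) : 0 ≤ mkNorm 𝕜 μ :=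
  (norm_nonneg _).trans <|
    norm_uIntegral_le_mkNorm (𝕜 := 𝕜) (f := 0) hμ h0 (LipschitzWith.const' 0 (K := 0)) (by simp)

theorem norm_uIntegral_le_mkNorm_mul_diam_add_one (hμ : BddVar μ) (h0 : μ univ = 0)
    {f : T → X} (hf : LipschitzWith 1 f) :
    ‖uIntegral 𝕜 μ f‖ ≤ mkNorm 𝕜 μ * (Metric.diam (univ : Set T) + 1) := by
  set D := Metric.diam (univ : Set T)
  have hc : 0 < D + 1 := by positivity
  have hmk := mkNorm_nonneg (𝕜 := 𝕜) hμ h0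
  refine norm_uIntegral_le_of_forall (by positivity) fun I hI => ?_
  rcases isEmpty_or_nonempty T with hT | ⟨⟨t₀⟩⟩
  · exact (hI.norm_le hf.continuous hμ le_rfl isEmptyElim).trans (by simp; positivity)
  set a : 𝕜 := (((D + 1)⁻¹ : ℝ) : 𝕜)
  have ha : ‖a‖ = (D + 1)⁻¹ := by rw [RCLike.norm_ofReal, abs_of_pos (inv_pos.2 hc)]
  let g := fun t => a • (f t + -f t₀)
  have hg : HasUIntegral 𝕜 μ g (a * I) := by
    have := (hI.add_const (-f t₀)).const_smul (RCLike.ofReal_ne_zero.2 (inv_pos.2 hc).ne')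
    rwa [h0, inner_zero_right, add_zero, RCLike.conj_ofReal] at this
  have hgL : LipschitzWith (‖a‖₊ * (1 * 1)) g :=
    (lipschitzWith_smul a).comp ((isometry_add_right _).lipschitz.comp hf)
  have hgb (t : T) : ‖g t‖ + (‖a‖₊ * (1 * 1) : NNReal) ≤ 1 := by
    have hft : ‖f t + -f t₀‖ ≤ D := by
      simpa [← sub_eq_add_neg, ← dist_eq_norm] using hf.dist_le_diam_univ t t₀
    simp only [g, norm_smul, ha, mul_one, coe_nnnorm]
    calc (D + 1)⁻¹ * ‖f t + -f t₀‖ + (D + 1)⁻¹ ≤ (D + 1)⁻¹ * (D + 1) := by nlinarith [inv_pos.2 hc]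
      _ = 1 := inv_mul_cancel₀ hc.ne'
  have hle := norm_uIntegral_le_mkNorm (𝕜 := 𝕜) hμ h0 hgL hgb
  rw [hg.uIntegral_eq hgL.continuous, norm_mul, ha, inv_mul_le_iff₀ hc] at hle
  linarith

end MongeKantorovich

end MeasureTheory

theorem mkNorm_mkNormStar_comparison_general
    {T : Type*} [MetricSpace T] [CompactSpace T] [MeasurableSpace T] [BorelSpace T]
    {𝕜 X : Type*} [RCLike 𝕜] [NormedAddCommGroup X] [InnerProductSpace 𝕜 X]
    (μ : VectorMeasure T X) (hμ : BddVar μ) (h0 : μ Set.univ = 0) :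
    mkNorm 𝕜 μ ≤ mkNormStar 𝕜 μ ∧
      mkNormStar 𝕜 μ ≤ mkNorm 𝕜 μ * (Metric.diam (Set.univ : Set T) + 1) ∧
      mkNormStar 𝕜 μ ≤ varNorm μ * Metric.diam (Set.univ : Set T) :=
  ⟨mkNorm_le fun _ _ hf hfL =>
      norm_uIntegral_le_mkNormStar hμ h0 (hf.lipschitzWith_one_of_norm_add_le_one hfL),
    mkNormStar_le fun _ hf => norm_uIntegral_le_mkNorm_mul_diam_add_one hμ h0 hf,
    mkNormStar_le fun _ hf => norm_uIntegral_le_varNorm_mul_diam hμ h0 hf⟩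

/-- for `μ ∈ cabv(X,0)`,
`‖μ‖_MK ≤ ‖μ‖*_MK ≤ ‖μ‖_MK (diam T + 1)` and `‖μ‖*_MK ≤ ‖μ‖ ⋅ diam T`. -/
theorem mkNorm_mkNormStar_comparison
    {T : Type*} [MetricSpace T] [CompactSpace T] [MeasurableSpace T] [BorelSpace T]
    {𝕜 X : Type*} [RCLike 𝕜] [NormedAddCommGroup X] [InnerProductSpace 𝕜 X] [CompleteSpace X]
    (μ : VectorMeasure T X) (hμ : BddVar μ) (h0 : μ Set.univ = 0) :
    mkNorm 𝕜 μ ≤ mkNormStar 𝕜 μ ∧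
      mkNormStar 𝕜 μ ≤ mkNorm 𝕜 μ * (Metric.diam (Set.univ : Set T) + 1) ∧
      mkNormStar 𝕜 μ ≤ varNorm μ * Metric.diam (Set.univ : Set T) :=
  mkNorm_mkNormStar_comparison_general μ hμ h0
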